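/- arXiv:1508.05140 — 2 statements merged into one kernel-verified Lean document; each statement's English description precedes it below -/
import Mathlib

section
/- Suppose α ≥ 1 and let q > r > 1. Then for all z, w ∈ ℝ^d with |z| = r and |w| = q: if α > 1 then D(z,w) ≥ (r^{1−α} − q^{1−α}) / (ρ̄ · κ̄ · (α−1)), and if α = 1 then D(z,w) ≥ (ρ̄ κ̄)^{-1} · log(q/r). -/
open MeasureTheory Metric
open scoped ENNReal NNReal Pointwise

/-- The `D`-length of the linear segment from `a` to `b`, parametrized by `μ`-length:
`μ(b-a) · ∫_0^1 f(a + t(b-a))⁻¹ dt`. -/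
noncomputable def segLen {d : ℕ} (μ f : EuclideanSpace ℝ (Fin d) → ℝ)
    (a b : EuclideanSpace ℝ (Fin d)) : ℝ≥0∞ :=
  ENNReal.ofReal (μ (b - a)) *
    ∫⁻ t in Set.Ioo (0 : ℝ) 1, ENNReal.ofReal ((f (a + t • (b - a)))⁻¹)

/-- `D(z,w)`: the infimum of `D`-lengths of piecewise linear paths from `z` to `w`,
encoded via their finite sequences of vertices. -/
noncomputable def Dmet {d : ℕ} (μ f : EuclideanSpace ℝ (Fin d) → ℝ)
    (z w : EuclideanSpace ℝ (Fin d)) : ℝ≥0∞ :=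
  ⨅ (n : ℕ) (p : Fin (n + 1) → EuclideanSpace ℝ (Fin d)) (_ : p 0 = z)
    (_ : p (Fin.last n) = w),
    ∑ i : Fin n, segLen μ f (p i.castSucc) (p i.succ)

/-!
Along a segment `t ↦ a + t • v`, `t ∈ (0,1)`, one has `‖a + t • v‖ ≤ ‖a‖ + t ‖v‖`, `f ≤ κ̄ ‖·‖ ^ α`
and `‖v‖ ≤ ρ̄ μ v`. Since `u ↦ max u 1 ^ (-α)` is antitone (the truncation keeps it integrable
near `0`), the substitution `u = ‖a‖ + t ‖v‖` bounds the `D`-length of the segment below by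
`(ρ̄ κ̄)⁻¹ ∫_{‖a‖}^{‖b‖} max u 1 ^ (-α) du`. These bounds telescope along a polygonal path, so
`D(z, w)` is at least the same integral from `r` to `q`, which is
`(r ^ (1 - α) - q ^ (1 - α)) / (α - 1)`, resp. `log (q / r)`.
-/

section Norms

variable {E : Type*} [NormedAddCommGroup E]

lemma inv_mul_norm_le_of_isLUB {μ : E → ℝ} (hμ0 : ∀ v, 0 ≤ μ v) (hμ_eq : ∀ v, μ v = 0 ↔ v = 0)
    {ρ : ℝ} (hρ : IsLUB {r : ℝ | ∃ z : E, z ≠ 0 ∧ r = ‖z‖ / μ z} ρ) (v : E) :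
    ρ⁻¹ * ‖v‖ ≤ μ v := by
  rcases eq_or_ne v 0 with rfl | hv
  · simpa using hμ0 0
  have hμv : 0 < μ v := (hμ0 v).lt_of_ne (Ne.symm ((hμ_eq v).not.mpr hv))
  have hle : ‖v‖ / μ v ≤ ρ := hρ.1 ⟨v, hv, rfl⟩
  have hρ0 : 0 < ρ := (div_pos (norm_pos_iff.mpr hv) hμv).trans_le hle
  rw [inv_mul_le_iff₀ hρ0, ← div_le_iff₀ hμv]
  exact hle

variable [NormedSpace ℝ E]

lemma inv_mul_max_one_rpow_neg_le_inv {α κ : ℝ} (hα : 0 ≤ α) {f₀ f : E → ℝ}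
    (hpos : ∀ z ∈ sphere (0 : E) 1, 0 < f₀ z) (hκ : ∀ z ∈ sphere (0 : E) 1, f₀ z ≤ κ)
    (hf : ∀ z : E, z ≠ 0 → f z = ‖z‖ ^ α * f₀ (‖z‖⁻¹ • z)) {x : E} (hx : x ≠ 0) :
    κ⁻¹ * max ‖x‖ 1 ^ (-α) ≤ (f x)⁻¹ := by
  have hu : ‖x‖⁻¹ • x ∈ sphere (0 : E) 1 := by simp [norm_smul, hx]
  have hmax : 0 < max ‖x‖ 1 := zero_lt_one.trans_le (le_max_right _ _)
  have hfx : 0 < f x := hf x hx ▸ mul_pos (by positivity) (hpos _ hu)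
  have hfle : f x ≤ κ * max ‖x‖ 1 ^ α := by
    rw [hf x hx, mul_comm]
    gcongr
    · exact (hpos _ hu).le.trans (hκ _ hu)
    · exact hκ _ hu
    · exact le_max_left _ _
  rw [Real.rpow_neg hmax.le, ← mul_inv]
  exact inv_anti₀ hfx hfle

lemma volume_setOf_add_smul_eq_zero {a v : E} (hv : v ≠ 0) :
    volume {t : ℝ | a + t • v = 0} = 0 :=
  Set.Subsingleton.measure_zero
    (fun _ h₁ _ h₂ => smul_left_injective ℝ hv (add_left_cancel (h₁.trans h₂.symm))) _

lemma ofReal_inv_norm_mul_integral_le_lintegral {g : ℝ → ℝ} (hg : Antitone g) (hg0 : ∀ u, 0 ≤ g u)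
    {f : E → ℝ} (hf : ∀ x ≠ 0, g ‖x‖ ≤ (f x)⁻¹) {a v : E} (hv : v ≠ 0) :
    ENNReal.ofReal (‖v‖⁻¹ * ∫ u in ‖a‖..‖a‖ + ‖v‖, g u) ≤
      ∫⁻ t in Set.Ioo (0 : ℝ) 1, ENNReal.ofReal (f (a + t • v))⁻¹ := by
  have hv' : ‖v‖ ≠ 0 := norm_ne_zero_iff.mpr hv
  have hcomp : Antitone fun t : ℝ => g (‖v‖ * t + ‖a‖) :=
    hg.comp_monotone fun _ _ h => by gcongr
  have hint : IntegrableOn (fun t : ℝ => g (‖v‖ * t + ‖a‖)) (Set.Ioo 0 1) :=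
    (hcomp.intervalIntegrable (a := 0) (b := 1)).1.mono_set Set.Ioo_subset_Ioc_self
  have hchange : ∫ t in Set.Ioo (0 : ℝ) 1, g (‖v‖ * t + ‖a‖) =
      ‖v‖⁻¹ * ∫ u in ‖a‖..‖a‖ + ‖v‖, g u := by
    rw [← integral_Ioc_eq_integral_Ioo, ← intervalIntegral.integral_of_le zero_le_one,
      intervalIntegral.integral_comp_mul_add g hv' ‖a‖]
    simp [add_comm]
  have hpointwise : ∀ᵐ t ∂volume.restrict (Set.Ioo (0 : ℝ) 1),
      ENNReal.ofReal (g (‖v‖ * t + ‖a‖)) ≤ ENNReal.ofReal (f (a + t • v))⁻¹ := by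
    have hne : ∀ᵐ t ∂(volume : Measure ℝ), a + t • v ≠ 0 :=
      measure_eq_zero_iff_ae_notMem.mp (volume_setOf_add_smul_eq_zero hv)
    filter_upwards [ae_restrict_mem measurableSet_Ioo, ae_restrict_of_ae hne] with t ht hne
    refine ENNReal.ofReal_le_ofReal ((hg ?_).trans (hf _ hne))
    calc ‖a + t • v‖ ≤ ‖a‖ + ‖t • v‖ := norm_add_le _ _
      _ = ‖v‖ * t + ‖a‖ := by rw [norm_smul, Real.norm_of_nonneg ht.1.le]; ring
  rw [← hchange, ofReal_integral_eq_lintegral_ofReal hint (.of_forall fun _ => hg0 _)]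
  exact lintegral_mono_ae hpointwise

end Norms

lemma antitone_max_one_rpow_neg {α : ℝ} (hα : 0 ≤ α) : Antitone fun u : ℝ => max u 1 ^ (-α) :=
  fun _ _ huv => Real.rpow_le_rpow_of_nonpos (zero_lt_one.trans_le (le_max_right _ _))
    (max_le_max_right 1 huv) (neg_nonpos.mpr hα)

lemma integral_max_one_rpow_neg {α r q : ℝ} (hr : 1 ≤ r) (hrq : r ≤ q) :
    ∫ u in r..q, max u 1 ^ (-α) = ∫ u in r..q, u ^ (-α) :=
  intervalIntegral.integral_congr fun u hu => by
    rw [Set.uIcc_of_le hrq] at hu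
    simp only [max_eq_left (hr.trans hu.1)]

lemma integral_rpow_neg_of_one_lt {α r q : ℝ} (hα : 1 < α) (hr : 0 < r) (hrq : r ≤ q) :
    ∫ u in r..q, u ^ (-α) = (r ^ (1 - α) - q ^ (1 - α)) / (α - 1) := by
  rw [integral_rpow (.inr ⟨by linarith, Set.uIcc_of_le hrq ▸ Set.notMem_Icc_of_lt hr⟩),
    show -α + 1 = 1 - α by ring, div_eq_div_iff (by linarith) (by linarith)]
  ring

section Paths

variable {d : ℕ} {μ f : EuclideanSpace ℝ (Fin d) → ℝ}

lemma ofReal_mul_integral_le_segLen {g : ℝ → ℝ} (hg : Antitone g) (hg0 : ∀ u, 0 ≤ g u)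
    (hf : ∀ x ≠ 0, g ‖x‖ ≤ (f x)⁻¹) {c : ℝ} (hc : 0 ≤ c) (hμ : ∀ v, c * ‖v‖ ≤ μ v)
    (a b : EuclideanSpace ℝ (Fin d)) :
    ENNReal.ofReal (c * ∫ u in ‖a‖..‖b‖, g u) ≤ segLen μ f a b := by
  rcases eq_or_ne (b - a) 0 with hba | hv
  · simp [sub_eq_zero.mp hba]
  set v := b - a with hv_def
  set I := ∫ u in ‖a‖..‖a‖ + ‖v‖, g u
  have hb : ‖b‖ ≤ ‖a‖ + ‖v‖ := by
    simpa [hv_def] using norm_add_le a v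
  have hbI : ∫ u in ‖a‖..‖b‖, g u ≤ I := by
    have hrest : I - ∫ u in ‖a‖..‖b‖, g u = ∫ u in ‖b‖..‖a‖ + ‖v‖, g u :=
      intervalIntegral.integral_interval_sub_left hg.intervalIntegrable hg.intervalIntegrable
    linarith [intervalIntegral.integral_nonneg (μ := volume) hb fun u _ => hg0 u]
  have hI : 0 ≤ ‖v‖⁻¹ * I := by
    have : 0 ≤ I := intervalIntegral.integral_nonneg (by simp) fun u _ => hg0 u
    positivity
  have hμv : 0 ≤ μ v := (by positivity : 0 ≤ c * ‖v‖).trans (hμ v)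
  calc ENNReal.ofReal (c * ∫ u in ‖a‖..‖b‖, g u)
      ≤ ENNReal.ofReal (μ v * (‖v‖⁻¹ * I)) := by
        refine ENNReal.ofReal_le_ofReal ?_
        calc c * ∫ u in ‖a‖..‖b‖, g u ≤ c * I := by gcongr
          _ = c * ‖v‖ * (‖v‖⁻¹ * I) := by field_simp [norm_ne_zero_iff.mpr hv]
          _ ≤ μ v * (‖v‖⁻¹ * I) := by gcongr; exact hμ v
    _ = ENNReal.ofReal (μ v) * ENNReal.ofReal (‖v‖⁻¹ * I) := ENNReal.ofReal_mul hμv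
    _ ≤ segLen μ f a b := by
        rw [segLen]
        gcongr
        exact ofReal_inv_norm_mul_integral_le_lintegral hg hg0 hf hv

lemma ofReal_sub_le_sum_segLen (G : EuclideanSpace ℝ (Fin d) → ℝ)
    (hG : ∀ a b, ENNReal.ofReal (G b - G a) ≤ segLen μ f a b) :
    ∀ (n : ℕ) (p : Fin (n + 1) → EuclideanSpace ℝ (Fin d)),
      ENNReal.ofReal (G (p (Fin.last n)) - G (p 0)) ≤
        ∑ i : Fin n, segLen μ f (p i.castSucc) (p i.succ)
  | 0, p => by simp
  | n + 1, p => by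
    rw [Fin.sum_univ_castSucc, ← sub_add_sub_cancel' (G (p (Fin.last n).castSucc))]
    refine ENNReal.ofReal_add_le.trans (add_le_add ?_ ?_)
    · have := ofReal_sub_le_sum_segLen G hG n (p ∘ Fin.castSucc)
      simp only [Function.comp_apply, Fin.castSucc_zero] at this
      simpa only [Fin.succ_castSucc] using this
    · simpa only [Fin.succ_last] using hG (p (Fin.last n).castSucc) (p (Fin.last n).succ)

lemma ofReal_sub_le_Dmet (G : EuclideanSpace ℝ (Fin d) → ℝ)
    (hG : ∀ a b, ENNReal.ofReal (G b - G a) ≤ segLen μ f a b) (z w : EuclideanSpace ℝ (Fin d)) :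
    ENNReal.ofReal (G w - G z) ≤ Dmet μ f z w :=
  le_iInf₂ fun n p => le_iInf₂ fun hz hw => hz ▸ hw ▸ ofReal_sub_le_sum_segLen G hG n p

lemma ofReal_mul_integral_le_Dmet {g : ℝ → ℝ} (hg : Antitone g) (hg0 : ∀ u, 0 ≤ g u)
    (hf : ∀ x ≠ 0, g ‖x‖ ≤ (f x)⁻¹) {c : ℝ} (hc : 0 ≤ c) (hμ : ∀ v, c * ‖v‖ ≤ μ v)
    (z w : EuclideanSpace ℝ (Fin d)) :
    ENNReal.ofReal (c * ∫ u in ‖z‖..‖w‖, g u) ≤ Dmet μ f z w := by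
  have hpotential : ∀ a b : EuclideanSpace ℝ (Fin d),
      (c * ∫ u in (0 : ℝ)..‖b‖, g u) - c * ∫ u in (0 : ℝ)..‖a‖, g u =
        c * ∫ u in ‖a‖..‖b‖, g u :=
    fun _ _ => by
      rw [← mul_sub, intervalIntegral.integral_interval_sub_left hg.intervalIntegrable
        hg.intervalIntegrable]
  simpa only [hpotential] using ofReal_sub_le_Dmet (fun x => c * ∫ u in (0 : ℝ)..‖x‖, g u)
    (fun a b => (hpotential a b).symm ▸ ofReal_mul_integral_le_segLen hg hg0 hf hc hμ a b) z w

end Paths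

theorem stmt6_general (d : ℕ) (α : ℝ) (hα : 1 ≤ α)
    (f₀ : EuclideanSpace ℝ (Fin d) → ℝ)
    (hpos : ∀ z ∈ sphere (0 : EuclideanSpace ℝ (Fin d)) 1, 0 < f₀ z)
    (f : EuclideanSpace ℝ (Fin d) → ℝ)
    (hf : ∀ z : EuclideanSpace ℝ (Fin d), z ≠ 0 → f z = ‖z‖ ^ α * f₀ (‖z‖⁻¹ • z))
    (μ : EuclideanSpace ℝ (Fin d) → ℝ)
    (hμ_add : ∀ z w, μ (z + w) ≤ μ z + μ w)
    (hμ_smul : ∀ (c : ℝ) z, μ (c • z) = |c| * μ z)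
    (hμ_eq : ∀ z, μ z = 0 ↔ z = 0)
    (ρ : ℝ) (hρ : IsLUB {r : ℝ | ∃ z : EuclideanSpace ℝ (Fin d), z ≠ 0 ∧ r = ‖z‖ / μ z} ρ)
    (κ : ℝ) (hκ : IsLUB (f₀ '' sphere (0 : EuclideanSpace ℝ (Fin d)) 1) κ)
    (q r : ℝ) (hr : 1 < r) (hq : r < q)
    (z w : EuclideanSpace ℝ (Fin d)) (hz : ‖z‖ = r) (hw : ‖w‖ = q) :
    (1 < α →
      ENNReal.ofReal ((r ^ (1 - α) - q ^ (1 - α)) / (ρ * κ * (α - 1))) ≤ Dmet μ f z w) ∧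
    (α = 1 →
      ENNReal.ofReal ((ρ * κ)⁻¹ * Real.log (q / r)) ≤ Dmet μ f z w) := by
  have hμ0 : ∀ v, 0 ≤ μ v := apply_nonneg (Seminorm.of μ hμ_add hμ_smul)
  have hκ_ge : ∀ u ∈ sphere (0 : EuclideanSpace ℝ (Fin d)) 1, f₀ u ≤ κ :=
    fun u hu => hκ.1 (Set.mem_image_of_mem f₀ hu)
  have hz0 : z ≠ 0 := by rintro rfl; rw [norm_zero] at hz; linarith
  have hu : ‖z‖⁻¹ • z ∈ sphere (0 : EuclideanSpace ℝ (Fin d)) 1 := by simp [norm_smul, hz0]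
  have hκ0 : 0 < κ := (hpos _ hu).trans_le (hκ_ge _ hu)
  have hρ0 : 0 ≤ ρ := (div_nonneg (norm_nonneg z) (hμ0 z)).trans (hρ.1 ⟨z, hz0, rfl⟩)
  have key := ofReal_mul_integral_le_Dmet (g := fun u => κ⁻¹ * max u 1 ^ (-α))
    ((antitone_max_one_rpow_neg (by linarith)).const_mul (inv_nonneg.mpr hκ0.le))
    (fun u => by positivity) (fun x => inv_mul_max_one_rpow_neg_le_inv (by linarith) hpos hκ_ge hf)
    (inv_nonneg.mpr hρ0) (inv_mul_norm_le_of_isLUB hμ0 hμ_eq hρ) z w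
  rw [hz, hw, intervalIntegral.integral_const_mul, integral_max_one_rpow_neg hr.le hq.le] at key
  refine ⟨fun hα1 => ?_, fun hα1 => ?_⟩
  · rw [integral_rpow_neg_of_one_lt hα1 (by linarith) hq.le] at key
    convert key using 2
    rw [div_eq_mul_inv, div_eq_mul_inv, mul_inv, mul_inv]
    ring
  · subst hα1
    simp only [Real.rpow_neg_one] at key
    rw [integral_inv_of_pos (by linarith) (by linarith)] at key
    convert key using 2
    ring

theorem stmt6 (d : ℕ) (hd : 0 < d) (α : ℝ) (hα : 1 ≤ α)
    (f₀ : EuclideanSpace ℝ (Fin d) → ℝ) (K : NNReal)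
    (hLip : LipschitzOnWith K f₀ (sphere (0 : EuclideanSpace ℝ (Fin d)) 1))
    (hpos : ∀ z ∈ sphere (0 : EuclideanSpace ℝ (Fin d)) 1, 0 < f₀ z)
    (f : EuclideanSpace ℝ (Fin d) → ℝ) (hf0 : f 0 = 0)
    (hf : ∀ z : EuclideanSpace ℝ (Fin d), z ≠ 0 → f z = ‖z‖ ^ α * f₀ (‖z‖⁻¹ • z))
    (μ : EuclideanSpace ℝ (Fin d) → ℝ)
    (hμ_add : ∀ z w, μ (z + w) ≤ μ z + μ w)
    (hμ_smul : ∀ (c : ℝ) z, μ (c • z) = |c| * μ z)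
    (hμ_eq : ∀ z, μ z = 0 ↔ z = 0)
    (ρ : ℝ) (hρ : IsLUB {r : ℝ | ∃ z : EuclideanSpace ℝ (Fin d), z ≠ 0 ∧ r = ‖z‖ / μ z} ρ)
    (κ : ℝ) (hκ : IsLUB (f₀ '' sphere (0 : EuclideanSpace ℝ (Fin d)) 1) κ)
    (q r : ℝ) (hr : 1 < r) (hq : r < q)
    (z w : EuclideanSpace ℝ (Fin d)) (hz : ‖z‖ = r) (hw : ‖w‖ = q) :
    (1 < α →
      ENNReal.ofReal ((r ^ (1 - α) - q ^ (1 - α)) / (ρ * κ * (α - 1))) ≤ Dmet μ f z w) ∧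
    (α = 1 →
      ENNReal.ofReal ((ρ * κ)⁻¹ * Real.log (q / r)) ≤ Dmet μ f z w) :=
  stmt6_general d α hα f₀ hpos f hf μ hμ_add hμ_smul hμ_eq ρ hρ κ hκ q r hr hq z w hz hw
end

section
/- Let q > 1. For every z ∈ ∂Q_s there exists c ∈ ℝ such that z + c·x ∈ q·(P_x ∪ P_{−x}) and D(z, z + c·x) ≤ (1 − q^{1−α})/(κ̄_s·(α−1)) + 1/κ̲_s. -/
open MeasureTheory Metric
open scoped ENNReal NNReal Pointwise RealInnerProductSpace

/-!
Write `z = s • w + t • v` with `w ∈ Q`, `t ∈ [0, 1]` and `v = ±x`, and follow the straight path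
`τ ↦ s • w + τ • v`, `τ ∈ [t, q]`, of `μ`-length `q - t`. While `τ ≤ 1` it stays on `∂Q_s`
(beyond a boundary point, a chord of a convex set cannot re-enter the interior), where
`f = f_s ≥ κ̲_s`. For `τ ≥ 1` it is `τ • P` with `P = s • (τ⁻¹ • w) + v ∈ ∂Q_s ∩ (P_x ∪ P_{-x})`,
where homogeneity and flatness give `f = τ ^ α κ̄_s`. So the `D`-length is at most
`(1 - t) / κ̲_s + ∫₁^q τ^(-α) / κ̄_s dτ`.
-/

open Set
open scoped Topology
open scoped Interval

lemma Dmet_le_segLen {d : ℕ} (μ f : EuclideanSpace ℝ (Fin d) → ℝ)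
    (z w : EuclideanSpace ℝ (Fin d)) : Dmet μ f z w ≤ segLen μ f z w :=
  iInf_le_of_le 1 <| iInf_le_of_le ![z, w] <| iInf_le_of_le rfl <| iInf_le_of_le rfl <| by
    simp

lemma segLen_add_smul_le {d : ℕ} {μ f : EuclideanSpace ℝ (Fin d) → ℝ}
    {a v : EuclideanSpace ℝ (Fin d)} {c : ℝ} (hc : 0 ≤ c) (hμ : μ (c • v) = c) {g : ℝ → ℝ}
    (hg : IntervalIntegrable g volume 0 c) (hg₀ : ∀ u ∈ Ioo 0 c, 0 ≤ g u)
    (hfg : ∀ u ∈ Ioo 0 c, (f (a + u • v))⁻¹ ≤ g u) :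
    segLen μ f a (a + c • v) ≤ ENNReal.ofReal (∫ u in 0..c, g u) := by
  rcases hc.eq_or_lt with rfl | hc
  · simp [segLen, by simpa using hμ]
  have hmem : ∀ r ∈ Ioo (0 : ℝ) 1, c * r ∈ Ioo 0 c := fun r hr =>
    ⟨by nlinarith [hr.1], by nlinarith [hr.2]⟩
  have hint : IntegrableOn (fun r => g (c * r)) (Ioo 0 1) := by
    have := hg.comp_mul_left (c := c)
    simp only [zero_div, div_self hc.ne'] at this
    exact this.1.mono_set Ioo_subset_Ioc_self
  have hnn : 0 ≤ᵐ[volume.restrict (Ioo 0 1)] fun r => g (c * r) :=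
    ae_restrict_of_forall_mem measurableSet_Ioo fun r hr => hg₀ _ (hmem r hr)
  calc segLen μ f a (a + c • v)
      = ENNReal.ofReal c * ∫⁻ r in Ioo 0 1, ENNReal.ofReal (f (a + (c * r) • v))⁻¹ := by
        simp [segLen, hμ, smul_smul, mul_comm]
    _ ≤ ENNReal.ofReal c * ∫⁻ r in Ioo 0 1, ENNReal.ofReal (g (c * r)) :=
        mul_le_mul_of_nonneg_left (setLIntegral_mono' measurableSet_Ioo fun r hr =>
          ENNReal.ofReal_le_ofReal (hfg _ (hmem r hr))) zero_le
    _ = ENNReal.ofReal (c * ∫ r in 0..1, g (c * r)) := by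
        rw [intervalIntegral.integral_of_le zero_le_one, integral_Ioc_eq_integral_Ioo,
          ENNReal.ofReal_mul hc.le, ofReal_integral_eq_lintegral_ofReal hint hnn]
    _ = ENNReal.ofReal (∫ u in 0..c, g u) := by
        rw [intervalIntegral.mul_integral_comp_mul_left, mul_zero, mul_one]

/-- Majorant of `1 / f` along the path of the main theorem: `1 / κ̲` while the path runs
on `∂Q_s`, then `1 / (κ̄ τ^α)` once it has reached `τ • (∂Q_s ∩ (P_x ∪ P_{-x}))`. -/
noncomputable def pathProfile (κ₀ κ α τ : ℝ) : ℝ := if τ ≤ 1 then κ₀⁻¹ else κ⁻¹ * τ ^ (-α)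

section pathProfile

variable {κ₀ κ α t q : ℝ}

lemma pathProfile_eqOn_of_le (ht : t ≤ 1) :
    EqOn (pathProfile κ₀ κ α) (fun _ => κ₀⁻¹) (uIcc t 1) := fun τ hτ => by
  rw [uIcc_of_le ht] at hτ
  simp [pathProfile, hτ.2]

lemma pathProfile_eqOn_of_one_le (hq : 1 ≤ q) :
    EqOn (pathProfile κ₀ κ α) (fun τ => κ⁻¹ * τ ^ (-α)) (Ι 1 q) := fun τ hτ => by
  rw [uIoc_of_le hq] at hτ
  simp [pathProfile, not_le.2 hτ.1]

lemma pathProfile_nonneg (hκ₀ : 0 ≤ κ₀) (hκ : 0 ≤ κ) {τ : ℝ} (hτ : 0 ≤ τ) :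
    0 ≤ pathProfile κ₀ κ α τ := by
  unfold pathProfile
  split_ifs <;> positivity

lemma intervalIntegrable_pathProfile (ht : t ≤ 1) (hq : 1 ≤ q) :
    IntervalIntegrable (pathProfile κ₀ κ α) volume t q := by
  refine IntervalIntegrable.trans (b := 1) ?_ ?_
  · exact intervalIntegrable_const.congr_uIoo fun τ hτ =>
      (pathProfile_eqOn_of_le ht (uIoo_subset_uIcc_self hτ)).symm
  · exact ((intervalIntegral.intervalIntegrable_rpow
      (Or.inr (notMem_uIcc_of_lt zero_lt_one (by linarith)))).const_mul κ⁻¹).congr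
      (pathProfile_eqOn_of_one_le hq).symm

lemma integral_pathProfile (ht : t ≤ 1) (hq : 1 ≤ q) (hα : α ≠ 1) :
    ∫ τ in t..q, pathProfile κ₀ κ α τ = (1 - t) / κ₀ + (1 - q ^ (1 - α)) / (κ * (α - 1)) := by
  rw [← intervalIntegral.integral_add_adjacent_intervals
      (intervalIntegrable_pathProfile (q := 1) ht le_rfl)
      (intervalIntegrable_pathProfile le_rfl hq),
    intervalIntegral.integral_congr (pathProfile_eqOn_of_le ht),
    intervalIntegral.integral_congr_ae (ae_of_all _ fun τ hτ => pathProfile_eqOn_of_one_le hq hτ),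
    intervalIntegral.integral_const_mul, integral_rpow]
  · have h1α : (1 - α)⁻¹ = -(α - 1)⁻¹ := by rw [← neg_sub, inv_neg]
    simp only [intervalIntegral.integral_const, smul_eq_mul, Real.one_rpow,
      show -α + 1 = 1 - α by ring, div_eq_mul_inv, mul_inv, h1α]
    ring
  · exact Or.inr ⟨by contrapose! hα; linarith, notMem_uIcc_of_lt zero_lt_one (by linarith)⟩

lemma Dmet_add_smul_le {d : ℕ} {μ f : EuclideanSpace ℝ (Fin d) → ℝ}
    (hμ : ∀ (c : ℝ) z, μ (c • z) = |c| * μ z) {a v : EuclideanSpace ℝ (Fin d)} (hv : μ v = 1)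
    (hκ₀ : 0 < κ₀) (hκ : 0 < κ) (hα : 1 < α) (ht : t ∈ Icc 0 1) (hq : 1 < q)
    (hf : ∀ τ ∈ Ioo t q, (f (a + (τ - t) • v))⁻¹ ≤ pathProfile κ₀ κ α τ) :
    Dmet μ f a (a + (q - t) • v) ≤
      ENNReal.ofReal ((1 - q ^ (1 - α)) / (κ * (α - 1)) + 1 / κ₀) := by
  have hqt : 0 ≤ q - t := by linarith [ht.2]
  calc Dmet μ f a (a + (q - t) • v)
      ≤ segLen μ f a (a + (q - t) • v) := Dmet_le_segLen μ f _ _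
    _ ≤ ENNReal.ofReal (∫ u in 0..q - t, pathProfile κ₀ κ α (t + u)) := by
        refine segLen_add_smul_le hqt (by rw [hμ, hv, mul_one, abs_of_nonneg hqt]) ?_
          (fun u hu => pathProfile_nonneg hκ₀.le hκ.le (by linarith [ht.1, hu.1]))
          (fun u hu => by simpa using hf (t + u) ⟨by linarith [hu.1], by linarith [hu.2]⟩)
        simpa using (intervalIntegrable_pathProfile (κ₀ := κ₀) (κ := κ) (α := α) ht.2
          hq.le).comp_add_left t
    _ = ENNReal.ofReal ((1 - t) / κ₀ + (1 - q ^ (1 - α)) / (κ * (α - 1))) := by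
        rw [intervalIntegral.integral_comp_add_left, add_zero, add_sub_cancel,
          integral_pathProfile ht.2 hq.le hα.ne']
    _ ≤ ENNReal.ofReal ((1 - q ^ (1 - α)) / (κ * (α - 1)) + 1 / κ₀) := by
        rw [add_comm]
        gcongr
        linarith [ht.1]

end pathProfile

lemma IsGLB.pos_of_continuousOn {X : Type*} [TopologicalSpace X] {K : Set X} {g : X → ℝ}
    {m : ℝ} (hm : IsGLB (g '' K) m) (hK : IsCompact K) (hne : K.Nonempty)
    (hg : ContinuousOn g K) (hpos : ∀ x ∈ K, 0 < g x) : 0 < m := by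
  obtain ⟨x₀, hx₀, hmin⟩ := hK.exists_isMinOn hne hg
  exact (hpos x₀ hx₀).trans_le (hm.2 (by rintro _ ⟨y, hy, rfl⟩; exact hmin hy))

section NormedSpace

variable {E : Type*} [NormedAddCommGroup E] [NormedSpace ℝ E]

lemma Convex.add_smul_notMem_interior {C : Set E} (hC : Convex ℝ C) {p v : E} {a b : ℝ}
    (ha : 0 ≤ a) (hab : a ≤ b) (hneg : p + (-b) • v ∈ closure C)
    (hp : p + a • v ∉ interior C) : p + b • v ∉ interior C := by
  intro hb
  rcases hab.eq_or_lt with rfl | hab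
  · exact hp hb
  have hb₀ : 0 < b := ha.trans_lt hab
  apply hp
  have key : p + a • v =
      ((b + a) / (2 * b)) • (p + b • v) + ((b - a) / (2 * b)) • (p + (-b) • v) := by
    match_scalars <;> field_simp <;> ring
  rw [key]
  exact hC.combo_interior_closure_mem_interior hb hneg (by positivity)
    (div_nonneg (by linarith) (by positivity)) (by field_simp; ring)

lemma apply_smul_of_mem_frontier {C : Set E} {f fs : E → ℝ} {α : ℝ} (hC : Convex ℝ C)
    (hC₀ : C ∈ 𝓝 0) (hf : ∀ z, z ≠ 0 → f z = gauge C z ^ α * fs ((gauge C z)⁻¹ • z)) {p : E}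
    (hp : p ∈ frontier C) {τ : ℝ} (hτ : 0 < τ) : f (τ • p) = τ ^ α * fs p := by
  have hgauge : gauge C (τ • p) = τ := by
    rw [gauge_smul_of_nonneg hτ.le, (gauge_eq_one_iff_mem_frontier hC hC₀).2 hp, smul_eq_mul,
      mul_one]
  have hne : τ • p ≠ 0 := fun h => by
    rw [h, gauge_zero] at hgauge
    exact hτ.ne hgauge
  rw [hf _ hne, hgauge, inv_smul_smul₀ hτ.ne']

lemma inv_le_pathProfile {C F : Set E} {f fs : E → ℝ} {α κ₀ κ τ : ℝ} {y : E}
    (hC : Convex ℝ C) (hC₀ : C ∈ 𝓝 0)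
    (hf : ∀ z, z ≠ 0 → f z = gauge C z ^ α * fs ((gauge C z)⁻¹ • z)) (hκ₀ : 0 < κ₀)
    (hfs : ∀ z ∈ frontier C, κ₀ ≤ fs z) (hflat : ∀ z ∈ frontier C ∩ F, fs z = κ)
    (hle : τ ≤ 1 → y ∈ frontier C) (hgt : 1 < τ → τ⁻¹ • y ∈ frontier C ∩ F) :
    (f y)⁻¹ ≤ pathProfile κ₀ κ α τ := by
  unfold pathProfile
  split_ifs with hτ
  · have hy := hle hτ
    have := apply_smul_of_mem_frontier hC hC₀ hf hy one_pos
    rw [one_smul, Real.one_rpow, one_mul] at this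
    exact this ▸ inv_anti₀ hκ₀ (hfs y hy)
  · have hτ₀ : 0 < τ := by linarith
    rw [← smul_inv_smul₀ hτ₀.ne' y, apply_smul_of_mem_frontier hC hC₀ hf (hgt (by linarith)).1 hτ₀,
      hflat _ (hgt (by linarith)), Real.rpow_neg hτ₀.le, mul_inv, mul_comm]

end NormedSpace

lemma notMem_interior_of_forall_inner_le {E : Type*} [NormedAddCommGroup E]
    [InnerProductSpace ℝ E] {C : Set E} {p v : E} (hv : v ≠ 0)
    (h : ∀ y ∈ C, ⟪y, v⟫ ≤ ⟪p, v⟫) : p ∉ interior C := by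
  intro hp
  have hlim : Filter.Tendsto (fun ε : ℝ => p + ε • v) (𝓝[>] 0) (𝓝 p) := by
    have : Continuous fun ε : ℝ => p + ε • v := by fun_prop
    simpa using (this.tendsto 0).mono_left nhdsWithin_le_nhds
  obtain ⟨ε, hεC, hε⟩ :=
    ((hlim.eventually (mem_interior_iff_mem_nhds.1 hp)).and self_mem_nhdsWithin).exists
  have hεv := h _ hεC
  rw [inner_add_left, real_inner_smul_left, real_inner_self_eq_norm_sq] at hεv
  have hv2 : 0 < ‖v‖ ^ 2 := by positivity
  nlinarith

def scaledCylinder {E : Type*} [AddCommGroup E] [Module ℝ E] (Q : Set E) (s : ℝ) (x : E) : Set E :=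
  {y | ∃ z ∈ Q, ∃ t ∈ Icc (-1 : ℝ) 1, y = s • z + t • x}

namespace scaledCylinder

variable {E : Type*} [NormedAddCommGroup E] [InnerProductSpace ℝ E] {Q : Set E} {s : ℝ}
  {x w y : E}

lemma smul_add_smul_mem (hw : w ∈ Q) {t : ℝ} (ht : |t| ≤ 1) :
    s • w + t • x ∈ scaledCylinder Q s x :=
  ⟨w, hw, t, abs_le.1 ht, rfl⟩

lemma eq_of_eq_or_eq_neg {v : E} (hv : v = x ∨ v = -x) :
    scaledCylinder Q s v = scaledCylinder Q s x := by
  rcases hv with rfl | rfl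
  · rfl
  ext y
  constructor <;> rintro ⟨w, hw, t, ht, rfl⟩ <;>
    exact ⟨w, hw, -t, ⟨by linarith [ht.2], by linarith [ht.1]⟩, by simp⟩

lemma exists_eq_of_mem (hy : y ∈ scaledCylinder Q s x) :
    ∃ w ∈ Q, ∃ t ∈ Icc (0 : ℝ) 1, ∃ v, (v = x ∨ v = -x) ∧ y = s • w + t • v := by
  obtain ⟨w, hw, t, ht, rfl⟩ := hy
  rcases le_total 0 t with h | h
  · exact ⟨w, hw, t, ⟨h, ht.2⟩, x, Or.inl rfl, rfl⟩
  · exact ⟨w, hw, -t, ⟨by linarith, by linarith [ht.1]⟩, -x, Or.inr rfl, by simp⟩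

lemma isCompact (hQ : IsCompact Q) : IsCompact (scaledCylinder Q s x) := by
  have : scaledCylinder Q s x = (fun p : E × ℝ => s • p.1 + p.2 • x) '' (Q ×ˢ Icc (-1) 1) := by
    ext y
    simp [scaledCylinder, eq_comm, and_assoc]
  rw [this]
  exact (hQ.prod isCompact_Icc).image (by fun_prop)

lemma convex (hQ : Convex ℝ Q) : Convex ℝ (scaledCylinder Q s x) := by
  rintro _ ⟨w₁, hw₁, t₁, ht₁, rfl⟩ _ ⟨w₂, hw₂, t₂, ht₂, rfl⟩ a b ha hb hab
  exact ⟨a • w₁ + b • w₂, hQ hw₁ hw₂ ha hb hab, a * t₁ + b * t₂,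
    convex_Icc _ _ ht₁ ht₂ ha hb hab, by module⟩

lemma inner_le (hQx : ∀ w ∈ Q, ⟪w, x⟫ = 0) (hy : y ∈ scaledCylinder Q s x) :
    ⟪y, x⟫ ≤ ‖x‖ ^ 2 := by
  obtain ⟨w, hw, t, ht, rfl⟩ := hy
  rw [inner_add_left, real_inner_smul_left, real_inner_smul_left, hQx w hw,
    real_inner_self_eq_norm_sq]
  nlinarith [ht.2, sq_nonneg ‖x‖]

lemma mem_nhds_zero (hs : 1 ≤ s) (hx : x ≠ 0)
    (hQ : ∀ z, ‖z‖ ≤ ‖x‖ → ⟪z, x⟫ = 0 → z ∈ Q) : scaledCylinder Q s x ∈ 𝓝 0 := by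
  refine Filter.mem_of_superset (ball_mem_nhds 0 (norm_pos_iff.2 hx)) fun y hy => ?_
  rw [mem_ball_zero_iff] at hy
  have hx2 : 0 < ‖x‖ ^ 2 := by positivity
  set τ := ⟪y, x⟫ / ‖x‖ ^ 2
  have horth : ⟪y - τ • x, x⟫ = 0 := by
    rw [inner_sub_left, real_inner_smul_left, real_inner_self_eq_norm_sq,
      div_mul_cancel₀ _ hx2.ne', sub_self]
  have hnorm : ‖y - τ • x‖ ≤ ‖y‖ := by
    have := norm_add_sq_eq_norm_sq_add_norm_sq_real
      (by rw [real_inner_smul_right, horth, mul_zero] : ⟪y - τ • x, τ • x⟫ = 0)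
    rw [sub_add_cancel] at this
    nlinarith [norm_nonneg (y - τ • x), norm_nonneg y, norm_nonneg (τ • x)]
  have hτ : |τ| ≤ 1 := by
    rw [abs_div, abs_of_pos hx2, div_le_one hx2, sq]
    exact (abs_real_inner_le_norm y x).trans (by gcongr)
  refine ⟨s⁻¹ • (y - τ • x), hQ _ ?_ ?_, τ, abs_le.1 hτ, ?_⟩
  · rw [norm_smul, Real.norm_of_nonneg (by positivity)]
    calc s⁻¹ * ‖y - τ • x‖ ≤ 1 * ‖y‖ := by
          gcongr
          exact inv_le_one_of_one_le₀ hs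
      _ ≤ ‖x‖ := by linarith
  · rw [real_inner_smul_left, horth, mul_zero]
  · rw [smul_inv_smul₀ (by positivity), sub_add_cancel]

lemma add_mem_frontier (hQx : ∀ w ∈ Q, ⟪w, x⟫ = 0) (hx : x ≠ 0) (hw : w ∈ Q) :
    s • w + x ∈ frontier (scaledCylinder Q s x) := by
  have hmem : s • w + x ∈ scaledCylinder Q s x := by
    simpa using smul_add_smul_mem (x := x) (s := s) (t := 1) hw (by simp)
  refine ⟨subset_closure hmem, notMem_interior_of_forall_inner_le hx fun y hy => ?_⟩
  rw [inner_add_left, real_inner_smul_left, hQx w hw, real_inner_self_eq_norm_sq, mul_zero,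
    zero_add]
  exact inner_le hQx hy

lemma smul_add_smul_mem_frontier_of_le (hQ : Convex ℝ Q) (hw : w ∈ Q) {t τ : ℝ} (ht : 0 ≤ t)
    (htτ : t ≤ τ) (hτ : τ ≤ 1) (hz : s • w + t • x ∈ frontier (scaledCylinder Q s x)) :
    s • w + τ • x ∈ frontier (scaledCylinder Q s x) :=
  ⟨subset_closure (smul_add_smul_mem hw (abs_le.2 ⟨by linarith, hτ⟩)),
    (convex hQ).add_smul_notMem_interior ht htτ
      (subset_closure (smul_add_smul_mem hw (by rw [abs_neg, abs_of_nonneg] <;> linarith)))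
      hz.2⟩

lemma inv_smul_mem_frontier_inter (hQx : ∀ w ∈ Q, ⟪w, x⟫ = 0) (hQ : Convex ℝ Q)
    (hQ₀ : 0 ∈ Q) (hx : x ≠ 0) {v : E} (hv : v = x ∨ v = -x) (hw : w ∈ Q) {τ : ℝ} (hτ : 1 ≤ τ) :
    τ⁻¹ • (s • w + τ • v) ∈
      frontier (scaledCylinder Q s x) ∩ ({z | ⟪z - x, x⟫ = 0} ∪ {z | ⟪z + x, x⟫ = 0}) := by
  have hτw : τ⁻¹ • w ∈ Q :=
    hQ.smul_mem_of_zero_mem hQ₀ hw ⟨by positivity, inv_le_one_of_one_le₀ hτ⟩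
  have hQv : ∀ w ∈ Q, ⟪w, v⟫ = 0 := by
    rcases hv with rfl | rfl <;> simpa using hQx
  rw [smul_add, smul_comm, inv_smul_smul₀ (by positivity)]
  have hv₀ : v ≠ 0 := by rcases hv with rfl | rfl <;> simpa
  refine ⟨eq_of_eq_or_eq_neg hv ▸ add_mem_frontier hQv hv₀ hτw, ?_⟩
  rcases hv with rfl | rfl
  · left; simp [real_inner_smul_left, hQx _ hτw]
  · right; simp [real_inner_smul_left, hQx _ hτw]

end scaledCylinder

theorem stmt13_general (d : ℕ)
    (μ : EuclideanSpace ℝ (Fin d) → ℝ)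
    (hμ_smul : ∀ (c : ℝ) z, μ (c • z) = |c| * μ z)
    (ρ : ℝ)
    (x : EuclideanSpace ℝ (Fin d)) (hx1 : μ x = 1) (hx2 : ‖x‖ = ρ)
    (s : ℝ) (hs : 1 < s)
    (Q : Set (EuclideanSpace ℝ (Fin d)))
    (hQplane : ∀ z ∈ Q, ⟪z, x⟫ = 0)
    (hQcomp : IsCompact Q) (hQconv : Convex ℝ Q)
    (hQball : ∀ z : EuclideanSpace ℝ (Fin d), ‖z‖ ≤ ρ → ⟪z, x⟫ = 0 → z ∈ Q)
    (Qs : Set (EuclideanSpace ℝ (Fin d)))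
    (hQs : Qs = {y | ∃ z ∈ Q, ∃ t ∈ Set.Icc (-1 : ℝ) 1, y = s • z + t • x})
    (Px Pnx : Set (EuclideanSpace ℝ (Fin d)))
    (hPx : Px = {z | ⟪z - x, x⟫ = 0}) (hPnx : Pnx = {z | ⟪z + x, x⟫ = 0})
    (α : ℝ) (hα : 1 < α)
    (fs : EuclideanSpace ℝ (Fin d) → ℝ) (K : NNReal)
    (hfsLip : LipschitzOnWith K fs (frontier Qs))
    (hfspos : ∀ z ∈ frontier Qs, 0 < fs z)
    (κ : ℝ)
    (hfsflat : ∀ z ∈ frontier Qs ∩ (Px ∪ Pnx), fs z = κ)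
    (f : EuclideanSpace ℝ (Fin d) → ℝ)
    (hf : ∀ z : EuclideanSpace ℝ (Fin d), z ≠ 0 →
      f z = gauge Qs z ^ α * fs ((gauge Qs z)⁻¹ • z))
    (κlow : ℝ) (hκlow : IsGLB (fs '' frontier Qs) κlow)
    (q : ℝ) (hq : 1 < q) :
    ∀ z ∈ frontier Qs, ∃ c : ℝ,
      z + c • x ∈ q • (Px ∪ Pnx) ∧
      Dmet μ f z (z + c • x) ≤
        ENNReal.ofReal ((1 - q ^ (1 - α)) / (κ * (α - 1)) + 1 / κlow) := by
  intro z hz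
  subst hx2 hPx hPnx
  replace hQs : Qs = scaledCylinder Q s x := hQs
  subst hQs
  have hx : x ≠ 0 := by
    rintro rfl
    simpa [hx1] using hμ_smul 0 0
  have hCc := scaledCylinder.isCompact (s := s) (x := x) hQcomp
  obtain ⟨w, hw, t, ht, v, hv, rfl⟩ :=
    scaledCylinder.exists_eq_of_mem (hCc.isClosed.frontier_subset hz)
  have hface := fun τ (hτ : 1 ≤ τ) => scaledCylinder.inv_smul_mem_frontier_inter (s := s)
    hQplane hQconv (hQball 0 (by simp) (by simp)) hx hv hw hτ
  have hκ : 0 < κ := hfsflat _ (hface 1 le_rfl) ▸ hfspos _ (hface 1 le_rfl).1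
  have hκlow₀ : 0 < κlow := hκlow.pos_of_continuousOn
    (hCc.of_isClosed_subset isClosed_frontier hCc.isClosed.frontier_subset) ⟨_, hz⟩
    hfsLip.continuousOn hfspos
  obtain ⟨c, hc⟩ : ∃ c : ℝ, (q - t) • v = c • x := by
    rcases hv with rfl | rfl
    exacts [⟨_, rfl⟩, ⟨t - q, by module⟩]
  have hμv : μ v = 1 := by
    rcases hv with rfl | rfl
    exacts [hx1, by simpa [hx1] using hμ_smul (-1) x]
  have hend : s • w + t • v + (q - t) • v = q • (q⁻¹ • (s • w + q • v)) := by
    rw [smul_inv_smul₀ (by positivity)]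
    module
  refine ⟨c, hc ▸ hend ▸ smul_mem_smul_set (hface q hq.le).2, ?_⟩
  rw [← hc]
  refine Dmet_add_smul_le hμ_smul hμv hκlow₀ hκ hα ht hq fun τ hτ => ?_
  rw [show s • w + t • v + (τ - t) • v = s • w + τ • v by module]
  refine inv_le_pathProfile (scaledCylinder.convex hQconv)
    (scaledCylinder.mem_nhds_zero hs.le hx hQball) hf hκlow₀
    (fun y hy => hκlow.1 ⟨y, hy, rfl⟩) hfsflat (fun hτ₁ => ?_) (fun hτ₁ => hface τ hτ₁.le)
  rw [← scaledCylinder.eq_of_eq_or_eq_neg hv] at hz ⊢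
  exact scaledCylinder.smul_add_smul_mem_frontier_of_le hQconv hw ht.1 hτ.1.le hτ₁ hz

theorem stmt13 (d : ℕ) (hd : 0 < d)
    (μ : EuclideanSpace ℝ (Fin d) → ℝ)
    (hμ_add : ∀ z w, μ (z + w) ≤ μ z + μ w)
    (hμ_smul : ∀ (c : ℝ) z, μ (c • z) = |c| * μ z)
    (hμ_eq : ∀ z, μ z = 0 ↔ z = 0)
    (ρ : ℝ) (hρ : IsLUB {r : ℝ | ∃ z : EuclideanSpace ℝ (Fin d), z ≠ 0 ∧ r = ‖z‖ / μ z} ρ)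
    (x : EuclideanSpace ℝ (Fin d)) (hx1 : μ x = 1) (hx2 : ‖x‖ = ρ)
    (s : ℝ) (hs : 1 < s)
    (Q : Set (EuclideanSpace ℝ (Fin d)))
    (hQplane : ∀ z ∈ Q, ⟪z, x⟫ = 0)
    (hQcomp : IsCompact Q) (hQconv : Convex ℝ Q)
    (hQsymm : ∀ z ∈ Q, -z ∈ Q)
    (hQball : ∀ z : EuclideanSpace ℝ (Fin d), ‖z‖ ≤ ρ → ⟪z, x⟫ = 0 → z ∈ Q)
    (Qs : Set (EuclideanSpace ℝ (Fin d)))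
    (hQs : Qs = {y | ∃ z ∈ Q, ∃ t ∈ Set.Icc (-1 : ℝ) 1, y = s • z + t • x})
    (Px Pnx : Set (EuclideanSpace ℝ (Fin d)))
    (hPx : Px = {z | ⟪z - x, x⟫ = 0}) (hPnx : Pnx = {z | ⟪z + x, x⟫ = 0})
    (α : ℝ) (hα : 1 < α)
    (fs : EuclideanSpace ℝ (Fin d) → ℝ) (K : NNReal)
    (hfsLip : LipschitzOnWith K fs (frontier Qs))
    (hfspos : ∀ z ∈ frontier Qs, 0 < fs z)
    (κ : ℝ) (hκ : IsLUB (fs '' frontier Qs) κ)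
    (hfsflat : ∀ z ∈ frontier Qs ∩ (Px ∪ Pnx), fs z = κ)
    (f : EuclideanSpace ℝ (Fin d) → ℝ) (hf0 : f 0 = 0)
    (hf : ∀ z : EuclideanSpace ℝ (Fin d), z ≠ 0 →
      f z = gauge Qs z ^ α * fs ((gauge Qs z)⁻¹ • z))
    (κlow : ℝ) (hκlow : IsGLB (fs '' frontier Qs) κlow)
    (q : ℝ) (hq : 1 < q) :
    ∀ z ∈ frontier Qs, ∃ c : ℝ,
      z + c • x ∈ q • (Px ∪ Pnx) ∧
      Dmet μ f z (z + c • x) ≤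
        ENNReal.ofReal ((1 - q ^ (1 - α)) / (κ * (α - 1)) + 1 / κlow) :=
  stmt13_general d μ hμ_smul ρ x hx1 hx2 s hs Q hQplane hQcomp hQconv hQball Qs hQs Px Pnx hPx hPnx
    α hα fs K hfsLip hfspos κ hfsflat f hf κlow hκlow q hq
end
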